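/- arXiv:1004.2744 — 2 statements merged into one kernel-verified Lean document; each statement's English description precedes it below -/
import Mathlib

section
/- Let Γ: (0,∞)×ℝ → ℝ be measurable and let f: (0,∞)×ℝ → [0,∞] be jointly measurable. Then for every σ-finite Borel measure η on ℝ and every β > 0, ∫₀^∞ e^{−βt} sup_{z∈ℝ} ∫_ℝ η(dx) ∫₀^t ∫_ℝ [Γ_{t−s}(x−z−y)]² f(s,y) dy ds dt ≤ ( ∫₀^∞ e^{−βt} ‖Γ_t‖²_{L²(ℝ)} dt ) · ( ∫₀^∞ e^{−βs} sup_{v∈ℝ} ∫_ℝ η(dx) f(s, x−v) ds ), where both sides are allowed to take the value +∞. -/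
/-!
By Tonelli and the reflection `y ↦ x - z - y`, the `η`-average at time `t` equals
`∫_0^t ∫_ℝ Γ_{t-s}(w)² H_s(w + z) dw ds` with `H_s(v) = ∫ f(s, x - v) η(dx)`. As a function of
`z` this is lower semicontinuous (a supremum of correlations of integrable with bounded
functions, which are continuous because translation is continuous in `L¹`), so its supremum over
`z ∈ ℝ` is already its supremum over `z ∈ ℚ`. This lets `H_s(w + z)` be replaced by
`sup_{q ∈ ℚ} H_s(w + q)`, which is measurable, unlike `s ↦ sup_v H_s(v)`, and is bounded by it.
The substitution `t = u + s` together with `e^{-β(u+s)} = e^{-βu} e^{-βs}` then factors the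
time integral into the two Laplace transforms.
-/

open MeasureTheory Real Set Filter Function Metric
open scoped ENNReal

theorem LowerSemicontinuous.iSup_comp_of_denseRange {α β δ : Type*} [TopologicalSpace α]
    [CompleteLinearOrder δ] {f : α → δ} (hf : LowerSemicontinuous f) {g : β → α}
    (hg : DenseRange g) : ⨆ b, f (g b) = ⨆ a, f a := by
  refine le_antisymm (iSup_comp_le f g) (iSup_le fun a => le_of_forall_lt fun c hc => ?_)
  obtain ⟨U, hU, hUo, haU⟩ := eventually_nhds_iff.1 (hf a c hc)
  obtain ⟨b, hb⟩ := hg.exists_mem_open hUo ⟨a, haU⟩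
  exact (hU _ hb).trans_le (le_iSup (fun b => f (g b)) b)

theorem ENNReal.iSup_min_natCast (a : ℝ≥0∞) : ⨆ n : ℕ, min a n = a := by
  rw [← inf_iSup_eq, ENNReal.iSup_natCast]
  exact inf_top_eq a

theorem iSup_indicator_closedBall_min_natCast {E : Type*} [SeminormedAddCommGroup E]
    (k : E → ℝ≥0∞) (p : E) :
    ⨆ m : ℕ, (closedBall (0 : E) m).indicator (fun q => min (k q) m) p = k p := by
  refine le_antisymm (iSup_le fun m => indicator_le_self' (fun _ _ => zero_le) p |>.trans
    (min_le_left _ _)) ?_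
  obtain ⟨N, hN⟩ := exists_nat_ge ‖p‖
  conv_lhs => rw [← ENNReal.iSup_min_natCast (k p)]
  refine iSup_le fun m => le_iSup_of_le (max m N) ?_
  have hp : p ∈ closedBall (0 : E) (max m N : ℕ) :=
    mem_closedBall_zero_iff.2 (hN.trans (by exact_mod_cast le_max_right m N))
  rw [indicator_of_mem hp]
  exact min_le_min le_rfl (by exact_mod_cast le_max_left m N)

theorem HasCompactSupport.continuous_integral_mul_comp_add {G : Type*} [AddCommGroup G]
    [TopologicalSpace G] [IsTopologicalAddGroup G] [MeasurableSpace G] [BorelSpace G]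
    [MeasurableAdd G] (μ : Measure G) [μ.IsAddRightInvariant] {c b : G → ℝ}
    (hc : HasCompactSupport c) (hc_cont : Continuous c) (hb : LocallyIntegrable b μ) :
    Continuous fun z => ∫ p, c p * b (p + z) ∂μ := by
  have hconv : (fun z => ∫ p, c p * b (p + z) ∂μ) =
      convolution b (fun x => c (-x)) (ContinuousLinearMap.mul ℝ ℝ) μ := by
    ext z
    rw [convolution_mul, ← integral_add_right_eq_self (fun t => b t * c (-(z - t))) z]
    congr 1 with p
    rw [mul_comm, sub_add_cancel_right, neg_neg]
  have hc_neg : HasCompactSupport fun x => c (-x) :=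
    hc.comp_isClosedEmbedding (Homeomorph.neg G).isClosedEmbedding
  rw [hconv]
  exact hc_neg.continuous_convolution_right _ hb (hc_cont.comp continuous_neg)

section Translation

variable {E : Type*} [NormedAddCommGroup E] [NormedSpace ℝ E] [FiniteDimensional ℝ E]
  [MeasurableSpace E] [BorelSpace E] (μ : Measure E) [μ.IsAddHaarMeasure]

theorem MeasureTheory.Integrable.continuous_integral_mul_comp_add {a b : E → ℝ}
    (ha : Integrable a μ) (hb : Measurable b) {C : ℝ} (hbC : ∀ x, ‖b x‖ ≤ C) :
    Continuous fun z => ∫ p, a p * b (p + z) ∂μ := by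
  have hC : 0 ≤ C := (norm_nonneg _).trans (hbC 0)
  have hb_loc : LocallyIntegrable b μ :=
    (locallyIntegrable_const C).mono hb.aestronglyMeasurable
      (ae_of_all _ fun x => (hbC x).trans (le_abs_self C))
  refine continuous_of_uniform_approx_of_continuous fun u hu => ?_
  obtain ⟨ε, hε, hεu⟩ := mem_uniformity_dist.1 hu
  obtain ⟨c, hc, hac, hc_cont, hc_int⟩ :=
    ha.exists_hasCompactSupport_integral_sub_le (div_pos hε (by linarith : 0 < C + 1))
  refine ⟨_, hc.continuous_integral_mul_comp_add μ hc_cont hb_loc, fun z => hεu ?_⟩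
  have hbz : AEStronglyMeasurable (fun p => b (p + z)) μ :=
    (hb.comp (measurable_add_const z)).aestronglyMeasurable
  have hbz_le : ∀ᵐ p ∂μ, ‖b (p + z)‖ ≤ C := ae_of_all _ fun p => hbC _
  rw [dist_eq_norm, ← integral_sub (ha.mul_bdd hbz hbz_le) (hc_int.mul_bdd hbz hbz_le)]
  calc ‖∫ p, (a p * b (p + z) - c p * b (p + z)) ∂μ‖
      ≤ ∫ p, C * ‖a p - c p‖ ∂μ := by
        refine norm_integral_le_of_norm_le ((ha.sub hc_int).norm.const_mul C) (ae_of_all _ ?_)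
        intro p
        rw [← sub_mul, norm_mul, mul_comm]
        exact mul_le_mul_of_nonneg_right (hbC _) (norm_nonneg _)
    _ = C * ∫ p, ‖a p - c p‖ ∂μ := integral_const_mul C _
    _ ≤ C * (ε / (C + 1)) := mul_le_mul_of_nonneg_left hac hC
    _ < ε := by
        rw [mul_div_assoc', div_lt_iff₀ (by linarith)]
        nlinarith

theorem continuous_lintegral_mul_comp_add {k H : E → ℝ≥0∞} (hk : Measurable k)
    (hk_fin : ∫⁻ p, k p ∂μ ≠ ∞) (hH : Measurable H) {C : ℝ≥0∞} (hC : C ≠ ∞)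
    (hHC : ∀ x, H x ≤ C) :
    Continuous fun z => ∫⁻ p, k p * H (p + z) ∂μ := by
  have hH_fin : ∀ x, H x ≠ ∞ := fun x => ne_top_of_le_ne_top hC (hHC x)
  have hHC' : ∀ x, ‖(H x).toReal‖ ≤ C.toReal := fun x => by
    rw [Real.norm_of_nonneg ENNReal.toReal_nonneg]
    exact ENNReal.toReal_mono hC (hHC x)
  have hk_int := integrable_toReal_of_lintegral_ne_top hk.aemeasurable hk_fin
  have h_eq : ∀ z, ∫⁻ p, k p * H (p + z) ∂μ =
      ENNReal.ofReal (∫ p, (k p).toReal * (H (p + z)).toReal ∂μ) := by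
    intro z
    have hHz : AEStronglyMeasurable (fun p => (H (p + z)).toReal) μ :=
      (hH.comp (measurable_add_const z)).ennreal_toReal.aestronglyMeasurable
    rw [ofReal_integral_eq_lintegral_ofReal (hk_int.mul_bdd hHz (ae_of_all _ fun p => hHC' _))
      (ae_of_all _ fun p => by positivity)]
    refine lintegral_congr_ae ?_
    filter_upwards [ae_lt_top hk hk_fin] with p hp
    rw [← ENNReal.toReal_mul, ENNReal.ofReal_toReal (ENNReal.mul_ne_top hp.ne (hH_fin _))]
  simp_rw [h_eq]
  exact ENNReal.continuous_ofReal.comp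
    (hk_int.continuous_integral_mul_comp_add μ hH.ennreal_toReal hHC')

theorem lowerSemicontinuous_lintegral_mul_comp_add {k H : E → ℝ≥0∞} (hk : Measurable k)
    (hH : Measurable H) : LowerSemicontinuous fun z => ∫⁻ p, k p * H (p + z) ∂μ := by
  set kt : ℕ → E → ℝ≥0∞ := fun m => (closedBall (0 : E) m).indicator (fun q => min (k q) m)
  have hkt : ∀ m, Measurable (kt m) := fun m =>
    (hk.min measurable_const).indicator measurableSet_closedBall
  have hkt_mono : Monotone kt := fun m m' hmm' p => by
    have hcast : (m : ℝ≥0∞) ≤ m' := by exact_mod_cast hmm'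
    exact (indicator_le_indicator_of_subset
      (closedBall_subset_closedBall (by exact_mod_cast hmm')) (fun _ => zero_le) p).trans
      (indicator_mono (fun q => min_le_min le_rfl hcast) p)
  have h_eq : ∀ z, ∫⁻ p, k p * H (p + z) ∂μ =
      ⨆ n : ℕ, ⨆ m, ∫⁻ p, kt m p * min (H (p + z)) n ∂μ := by
    intro z
    have hHn : ∀ n : ℕ, Measurable fun p => min (H (p + z)) n := fun n =>
      (hH.comp (measurable_add_const z)).min measurable_const
    have hmin_mono : ∀ x : ℝ≥0∞, Monotone fun n : ℕ => min x n := fun x n n' h =>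
      min_le_min le_rfl (by exact_mod_cast h)
    calc ∫⁻ p, k p * H (p + z) ∂μ = ∫⁻ p, ⨆ n : ℕ, k p * min (H (p + z)) n ∂μ := by
          simp_rw [← ENNReal.mul_iSup, ENNReal.iSup_min_natCast]
      _ = ⨆ n : ℕ, ∫⁻ p, k p * min (H (p + z)) n ∂μ :=
          lintegral_iSup (fun n => hk.mul (hHn n)) fun n n' h p =>
            mul_le_mul_right (hmin_mono _ h) _
      _ = ⨆ n : ℕ, ⨆ m, ∫⁻ p, kt m p * min (H (p + z)) n ∂μ := by
          refine iSup_congr fun n => Eq.trans ?_ (lintegral_iSup (fun m => (hkt m).mul (hHn n))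
            fun m m' h p => mul_le_mul_left (hkt_mono h p) _)
          simp_rw [← ENNReal.iSup_mul, kt, iSup_indicator_closedBall_min_natCast]
  simp_rw [h_eq]
  refine lowerSemicontinuous_iSup fun n => lowerSemicontinuous_iSup fun m =>
    (continuous_lintegral_mul_comp_add μ (hkt m) ?_ (hH.min measurable_const)
      (ENNReal.natCast_ne_top n) fun x => min_le_right _ _).lowerSemicontinuous
  refine ne_top_of_le_ne_top ?_ (lintegral_mono fun p =>
    indicator_mono (fun q => min_le_right (k q) m) p)
  rw [lintegral_indicator_const measurableSet_closedBall]
  exact ENNReal.mul_ne_top (ENNReal.natCast_ne_top m) measure_closedBall_lt_top.ne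

theorem lowerSemicontinuous_setLIntegral_lintegral_mul_comp_add {F : Type*}
    [NormedAddCommGroup F] [NormedSpace ℝ F] [FiniteDimensional ℝ F] [MeasurableSpace F]
    [BorelSpace F] (ν : Measure F) [ν.IsAddHaarMeasure] {k H : F → E → ℝ≥0∞}
    (hk : Measurable (uncurry k)) (hH : Measurable (uncurry H)) {S : Set F}
    (hS : MeasurableSet S) :
    LowerSemicontinuous fun z => ∫⁻ s in S, ∫⁻ w, k s w * H s (w + z) ∂μ ∂ν := by
  have h_eq : ∀ z, ∫⁻ s in S, ∫⁻ w, k s w * H s (w + z) ∂μ ∂ν =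
      ∫⁻ p, (S ×ˢ univ).indicator (uncurry k) p * uncurry H (p + (0, z)) ∂(ν.prod μ) := by
    intro z
    calc ∫⁻ s in S, ∫⁻ w, k s w * H s (w + z) ∂μ ∂ν
        = ∫⁻ p in S ×ˢ univ, k p.1 p.2 * H p.1 (p.2 + z) ∂(ν.prod μ) := by
          rw [← Measure.prod_restrict, Measure.restrict_univ, lintegral_prod _ (by fun_prop)]
      _ = ∫⁻ p, (S ×ˢ univ).indicator (uncurry k) p * uncurry H (p + (0, z)) ∂(ν.prod μ) := by
          rw [← lintegral_indicator (hS.prod MeasurableSet.univ)]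
          refine lintegral_congr fun p => ?_
          simp only [indicator_mul_left, uncurry_def, Prod.fst_add, Prod.snd_add, add_zero]
  simp_rw [h_eq]
  exact (lowerSemicontinuous_lintegral_mul_comp_add (ν.prod μ)
    (hk.indicator (hS.prod MeasurableSet.univ)) hH).comp (continuous_const.prodMk continuous_id)

end Translation

theorem lintegral_lintegral_lintegral_sub_mul {S G : Type*} [MeasurableSpace S] [AddCommGroup G]
    [MeasurableSpace G] [MeasurableAdd₂ G] [MeasurableNeg G] (ν : Measure S) (μ η : Measure G)
    [SFinite ν] [SFinite μ] [SFinite η] [μ.IsAddLeftInvariant] [μ.IsNegInvariant]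
    {K f : S → G → ℝ≥0∞} (hK : Measurable (uncurry K)) (hf : Measurable (uncurry f)) (z : G) :
    ∫⁻ x, ∫⁻ s, ∫⁻ y, K s (x - z - y) * f s y ∂μ ∂ν ∂η
      = ∫⁻ s, ∫⁻ w, K s w * ∫⁻ x, f s (x - (w + z)) ∂η ∂μ ∂ν := by
  calc ∫⁻ x, ∫⁻ s, ∫⁻ y, K s (x - z - y) * f s y ∂μ ∂ν ∂η
      = ∫⁻ x, ∫⁻ s, ∫⁻ w, K s w * f s (x - z - w) ∂μ ∂ν ∂η := by
        refine lintegral_congr fun x => lintegral_congr fun s => ?_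
        have := (Measure.measurePreserving_sub_left μ (x - z)).lintegral_comp
          (f := fun y => K s (x - z - y) * f s y) (by fun_prop)
        simpa only [sub_sub_cancel] using this.symm
    _ = ∫⁻ s, ∫⁻ w, ∫⁻ x, K s w * f s (x - z - w) ∂η ∂μ ∂ν := by
        rw [lintegral_lintegral_swap (Measurable.lintegral_prod_right'
          (f := fun p : (G × S) × G => K p.1.2 p.2 * f p.1.2 (p.1.1 - z - p.2))
          (by fun_prop)).aemeasurable]
        exact lintegral_congr fun s => lintegral_lintegral_swap (by fun_prop)
    _ = ∫⁻ s, ∫⁻ w, K s w * ∫⁻ x, f s (x - (w + z)) ∂η ∂μ ∂ν := by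
        refine lintegral_congr fun s => lintegral_congr fun w => ?_
        simp_rw [sub_sub, add_comm z w]
        exact lintegral_const_mul _ (by fun_prop)

theorem lintegral_lintegral_mul_le_of_le {α β : Type*} [MeasurableSpace α] [MeasurableSpace β]
    (μ : Measure α) (ν : Measure β) [SFinite μ] [SFinite ν] {k : β → ℝ≥0∞} {T : α → β → ℝ≥0∞}
    (hk : Measurable k) (hT : Measurable (uncurry T)) {F : α → ℝ≥0∞}
    (hTF : ∀ s a, T s a ≤ F s) :
    ∫⁻ s, ∫⁻ a, k a * T s a ∂ν ∂μ ≤ (∫⁻ a, k a ∂ν) * ∫⁻ s, F s ∂μ := by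
  rw [lintegral_lintegral_swap ((hk.comp measurable_snd).mul hT).aemeasurable,
    ← lintegral_mul_const _ hk]
  refine lintegral_mono fun a => ?_
  have hTa : Measurable fun s => T s a := hT.comp measurable_prodMk_right
  exact (lintegral_const_mul (k a) hTa).trans_le
    (mul_le_mul_right (lintegral_mono fun s => hTF s a) _)

theorem setLIntegral_Ioi_setLIntegral_Ioo_eq {ψ : ℝ → ℝ → ℝ≥0∞} (hψ : Measurable (uncurry ψ)) :
    ∫⁻ t in Ioi 0, ∫⁻ s in Ioo 0 t, ψ t s = ∫⁻ s in Ioi 0, ∫⁻ u in Ioi 0, ψ (u + s) s := by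
  set ψ' : ℝ × ℝ → ℝ≥0∞ := {p : ℝ × ℝ | p.2 < p.1}.indicator (uncurry ψ)
  have h_ind : ∀ t, ∫⁻ s in Ioo 0 t, ψ t s = ∫⁻ s in Ioi 0, ψ' (t, s) := by
    intro t
    rw [← Ioi_inter_Iio, inter_comm, ← Measure.restrict_restrict measurableSet_Iio,
      ← lintegral_indicator measurableSet_Iio]
    rfl
  have h_shift : ∀ s ∈ Ioi (0 : ℝ), ∫⁻ t in Ioi 0, ψ' (t, s) = ∫⁻ u in Ioi 0, ψ (u + s) s := by
    intro s hs
    have h_sub : Ioi s ⊆ Ioi (0 : ℝ) := Ioi_subset_Ioi (le_of_lt hs)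
    calc ∫⁻ t in Ioi 0, ψ' (t, s)
        = ∫⁻ t in Ioi 0, (Ioi s).indicator (fun t => ψ t s) t := rfl
      _ = ∫⁻ t in Ioi s, ψ t s := by
        rw [lintegral_indicator measurableSet_Ioi, Measure.restrict_restrict measurableSet_Ioi,
          inter_eq_left.2 h_sub]
      _ = ∫⁻ u in Ioi 0, ψ (u + s) s := by
        rw [(measurePreserving_add_right volume s).setLIntegral_comp_emb
          (measurableEmbedding_addRight s) (fun t => ψ t s), image_add_const_Ioi, zero_add]
  simp_rw [h_ind]
  rw [lintegral_lintegral_swap (f := fun t s => ψ' (t, s))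
    (hψ.indicator (measurableSet_lt measurable_snd measurable_fst)).aemeasurable]
  exact setLIntegral_congr_fun measurableSet_Ioi h_shift

theorem setLIntegral_exp_mul_convolution_le {α : Type*} [MeasurableSpace α] (ν : Measure α)
    [SFinite ν] {G T : ℝ → α → ℝ≥0∞} (hG : Measurable (uncurry G)) (hT : Measurable (uncurry T))
    {F : ℝ → ℝ≥0∞} (hTF : ∀ s w, T s w ≤ F s) (β : ℝ) :
    ∫⁻ t in Ioi 0, ENNReal.ofReal (exp (-β * t)) * ∫⁻ s in Ioo 0 t, ∫⁻ w, G (t - s) w * T s w ∂ν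
      ≤ (∫⁻ t in Ioi 0, ENNReal.ofReal (exp (-β * t)) * ∫⁻ w, G t w ∂ν) *
        ∫⁻ s in Ioi 0, ENNReal.ofReal (exp (-β * s)) * F s := by
  set e : ℝ → ℝ≥0∞ := fun t => ENNReal.ofReal (exp (-β * t)) with he
  have he_meas : Measurable e := by fun_prop
  have he_add : ∀ u s, e (u + s) = e u * e s := fun u s => by
    simp only [he, ← ENNReal.ofReal_mul (exp_nonneg _), ← exp_add, mul_add]
  have hGT : Measurable fun p : ℝ × ℝ => ∫⁻ w, G (p.1 - p.2) w * T p.2 w ∂ν :=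
    Measurable.lintegral_prod_right'
      (f := fun q : (ℝ × ℝ) × α => G (q.1.1 - q.1.2) q.2 * T q.1.2 q.2) (by fun_prop)
  have hk : Measurable fun p : ℝ × α => e p.1 * G p.1 p.2 := by fun_prop
  calc ∫⁻ t in Ioi 0, e t * ∫⁻ s in Ioo 0 t, ∫⁻ w, G (t - s) w * T s w ∂ν
      = ∫⁻ t in Ioi 0, ∫⁻ s in Ioo 0 t, e t * ∫⁻ w, G (t - s) w * T s w ∂ν :=
        lintegral_congr fun t => (lintegral_const_mul' _ _ ENNReal.ofReal_ne_top).symm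
    _ = ∫⁻ s in Ioi 0, ∫⁻ u in Ioi 0, e (u + s) * ∫⁻ w, G (u + s - s) w * T s w ∂ν :=
        setLIntegral_Ioi_setLIntegral_Ioo_eq ((he_meas.comp measurable_fst).mul hGT)
    _ = ∫⁻ s in Ioi 0, ∫⁻ p, e p.1 * G p.1 p.2 * (e s * T s p.2)
          ∂((volume.restrict (Ioi 0)).prod ν) := by
        refine lintegral_congr fun s => ?_
        rw [lintegral_prod _ (by fun_prop)]
        refine lintegral_congr fun u => ?_
        rw [add_sub_cancel_right, he_add, ← lintegral_const_mul' _ _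
          (ENNReal.mul_ne_top ENNReal.ofReal_ne_top ENNReal.ofReal_ne_top)]
        congr 1 with w
        ring
    _ ≤ (∫⁻ p, e p.1 * G p.1 p.2 ∂((volume.restrict (Ioi 0)).prod ν)) *
          ∫⁻ s in Ioi 0, e s * F s :=
        lintegral_lintegral_mul_le_of_le _ _ hk (by fun_prop)
          fun s p => mul_le_mul_right (hTF s p.2) _
    _ = (∫⁻ t in Ioi 0, e t * ∫⁻ w, G t w ∂ν) * ∫⁻ s in Ioi 0, e s * F s := by
        rw [lintegral_prod _ hk.aemeasurable]
        congr 1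
        exact lintegral_congr fun u => lintegral_const_mul' (e u) _ ENNReal.ofReal_ne_top

theorem deterministic_stochastic_young_general
    (Γ : ℝ → ℝ → ℝ) (f : ℝ → ℝ → ℝ≥0∞)
    (hΓ : Measurable fun p : ℝ × ℝ => Γ p.1 p.2)
    (hf : Measurable fun p : ℝ × ℝ => f p.1 p.2)
    (η : Measure ℝ) [SigmaFinite η] (β : ℝ) :
    ∫⁻ t in Ioi (0 : ℝ), ENNReal.ofReal (exp (-β * t)) *
        ⨆ z : ℝ, ∫⁻ x, (∫⁻ s in Ioo (0 : ℝ) t, ∫⁻ y,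
          ENNReal.ofReal ((Γ (t - s) (x - z - y)) ^ 2) * f s y) ∂η
      ≤ (∫⁻ t in Ioi (0 : ℝ), ENNReal.ofReal (exp (-β * t)) *
            ∫⁻ y, ENNReal.ofReal ((Γ t y) ^ 2)) *
        (∫⁻ s in Ioi (0 : ℝ), ENNReal.ofReal (exp (-β * s)) *
            ⨆ v : ℝ, ∫⁻ x, f s (x - v) ∂η) := by
  set H : ℝ → ℝ → ℝ≥0∞ := fun s v => ∫⁻ x, f s (x - v) ∂η
  have hH : Measurable (uncurry H) := Measurable.lintegral_prod_right'
    (f := fun q : (ℝ × ℝ) × ℝ => f q.1.1 (q.2 - q.1.2)) (by fun_prop)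
  set Hq : ℝ → ℝ → ℝ≥0∞ := fun s w => ⨆ q : ℚ, H s (w + q)
  have hHq : Measurable (uncurry Hq) := Measurable.iSup fun q => by fun_prop
  have h_sup : ∀ t, (⨆ z : ℝ, ∫⁻ x, (∫⁻ s in Ioo (0 : ℝ) t, ∫⁻ y,
      ENNReal.ofReal ((Γ (t - s) (x - z - y)) ^ 2) * f s y) ∂η) ≤
      ∫⁻ s in Ioo 0 t, ∫⁻ w, ENNReal.ofReal (Γ (t - s) w ^ 2) * Hq s w := by
    intro t
    have hK : Measurable (uncurry fun s w => ENNReal.ofReal (Γ (t - s) w ^ 2)) := by fun_prop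
    simp_rw [lintegral_lintegral_lintegral_sub_mul (volume.restrict (Ioo 0 t)) volume η hK hf]
    rw [← (lowerSemicontinuous_setLIntegral_lintegral_mul_comp_add volume volume hK hH
      measurableSet_Ioo).iSup_comp_of_denseRange Rat.denseRange_cast]
    exact iSup_le fun q => lintegral_mono fun s => lintegral_mono fun w =>
      mul_le_mul_right (le_iSup (fun q : ℚ => H s (w + q)) q) _
  calc _ ≤ ∫⁻ t in Ioi 0, ENNReal.ofReal (exp (-β * t)) *
        ∫⁻ s in Ioo 0 t, ∫⁻ w, ENNReal.ofReal (Γ (t - s) w ^ 2) * Hq s w :=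
        lintegral_mono fun t => mul_le_mul_right (h_sup t) _
    _ ≤ _ := setLIntegral_exp_mul_convolution_le volume
        (G := fun u w => ENNReal.ofReal (Γ u w ^ 2)) (by fun_prop) hHq
        (fun s w => iSup_le fun q => le_iSup (fun v => H s v) (w + q)) β

/-- **Deterministic core of the stochastic Young inequality.**
For measurable `Γ : (0,∞) × ℝ → ℝ` and jointly measurable `f : (0,∞) × ℝ → [0,∞]`,
for every σ-finite Borel measure `η` on `ℝ` and every `β > 0`, the weighted-in-time,
translation-uniform `η`-average of the space-time convolution of `Γ²` with `f` is bounded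
by the product of the Laplace-type transform of `t ↦ ‖Γ_t‖²_{L²(ℝ)}` and the corresponding
weighted norm of `f`. Both sides take values in `[0,∞]`. -/
theorem deterministic_stochastic_young
    (Γ : ℝ → ℝ → ℝ) (f : ℝ → ℝ → ℝ≥0∞)
    (hΓ : Measurable fun p : ℝ × ℝ => Γ p.1 p.2)
    (hf : Measurable fun p : ℝ × ℝ => f p.1 p.2)
    (η : Measure ℝ) [SigmaFinite η] (β : ℝ) (hβ : 0 < β) :
    ∫⁻ t in Ioi (0 : ℝ), ENNReal.ofReal (exp (-β * t)) *
        ⨆ z : ℝ, ∫⁻ x, (∫⁻ s in Ioo (0 : ℝ) t, ∫⁻ y,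
          ENNReal.ofReal ((Γ (t - s) (x - z - y)) ^ 2) * f s y) ∂η
      ≤ (∫⁻ t in Ioi (0 : ℝ), ENNReal.ofReal (exp (-β * t)) *
            ∫⁻ y, ENNReal.ofReal ((Γ t y) ^ 2)) *
        (∫⁻ s in Ioi (0 : ℝ), ENNReal.ofReal (exp (-β * s)) *
            ⨆ v : ℝ, ∫⁻ x, f s (x - v) ∂η) :=
  deterministic_stochastic_young_general Γ f hΓ hf η β
end

section
/- Let Ψ: ℝ → ℂ be measurable with Re Ψ(ξ) ≥ 0 for all ξ ∈ ℝ, and for β > 0 set Υ(β) := (1/2π) ∫_ℝ dξ/(β + 2 Re Ψ(ξ)). If Υ(β) < ∞ for some β > 0, then for every t > 0 the function ξ ↦ e^{−2t Re Ψ(ξ)} is Lebesgue integrable on ℝ, with the quantitative bound ∫_ℝ e^{−2t Re Ψ(ξ)} dξ ≤ 2π (β + 1/(e t)) Υ(β). -/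
open MeasureTheory Real Set
open scoped ENNReal

/-- Dalang's integral `Υ(β) := (1/2π) ∫_ℝ dξ / (β + 2 Re Ψ(ξ))` associated with a Lévy
exponent `Ψ`, with values in `[0,∞]`. -/
noncomputable def Upsilon (Ψ : ℝ → ℂ) (β : ℝ) : ℝ≥0∞ :=
  (ENNReal.ofReal (2 * π))⁻¹ * ∫⁻ ξ : ℝ, (ENNReal.ofReal (β + 2 * (Ψ ξ).re))⁻¹

/-! Everything rests on the pointwise bound `e^{-tx} (β + x) ≤ β + 1/(e t)` for `x ≥ 0`, which
follows from `e^{-tx} ≤ 1` and `y e^{-y} ≤ e^{-1}` at `y = tx`; integrating it against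
`1 / (β + x)` with `x = 2 Re Ψ(ξ)` bounds `∫ e^{-2t Re Ψ}` by `2π (β + 1/(e t)) Υ(β)`. -/

lemma exp_neg_mul_mul_add_le {β t x : ℝ} (hβ : 0 ≤ β) (ht : 0 < t) (hx : 0 ≤ x) :
    exp (-t * x) * (β + x) ≤ β + 1 / (exp 1 * t) := by
  have hexp_le_one : exp (-t * x) ≤ 1 := exp_le_one_iff.mpr (by nlinarith)
  have hmul_exp_le : x * exp (-t * x) ≤ 1 / (exp 1 * t) :=
    calc x * exp (-t * x) = t * x * exp (-(t * x)) / t := by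
          rw [neg_mul, mul_assoc, mul_div_cancel_left₀ _ ht.ne']
      _ ≤ exp (-1) / t := by gcongr; exact mul_exp_neg_le_exp_neg_one _
      _ = 1 / (exp 1 * t) := by rw [exp_neg, ← one_div, div_div]
  nlinarith

lemma ofReal_exp_neg_mul_le {β t x : ℝ} (hβ : 0 < β) (ht : 0 < t) (hx : 0 ≤ x) :
    ENNReal.ofReal (exp (-t * x)) ≤
      ENNReal.ofReal (β + 1 / (exp 1 * t)) * (ENNReal.ofReal (β + x))⁻¹ := by
  have hpos : 0 < β + x := by linarith
  rw [← div_eq_mul_inv, ← ENNReal.ofReal_div_of_pos hpos]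
  exact ENNReal.ofReal_le_ofReal
    ((le_div_iff₀ hpos).mpr (exp_neg_mul_mul_add_le hβ.le ht hx))

lemma lintegral_ofReal_exp_neg_mul_le {α : Type*} [MeasurableSpace α] (μ : Measure α)
    {f : α → ℝ} (hf : ∀ a, 0 ≤ f a) {β t : ℝ} (hβ : 0 < β) (ht : 0 < t) :
    ∫⁻ a, ENNReal.ofReal (exp (-t * f a)) ∂μ ≤
      ENNReal.ofReal (β + 1 / (exp 1 * t)) * ∫⁻ a, (ENNReal.ofReal (β + f a))⁻¹ ∂μ := by
  rw [← lintegral_const_mul' _ _ ENNReal.ofReal_ne_top]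
  exact lintegral_mono fun a ↦ ofReal_exp_neg_mul_le hβ ht (hf a)

lemma ofReal_two_pi_mul_Upsilon (Ψ : ℝ → ℂ) (β : ℝ) :
    ENNReal.ofReal (2 * π) * Upsilon Ψ β =
      ∫⁻ ξ : ℝ, (ENNReal.ofReal (β + 2 * (Ψ ξ).re))⁻¹ :=
  ENNReal.mul_inv_cancel_left (by simp [pi_pos]) ENNReal.ofReal_ne_top

/-- If `Re Ψ ≥ 0` and Dalang's integral `Υ(β)` is finite for some `β > 0`, then for every
`t > 0` the function `ξ ↦ e^{−2t Re Ψ(ξ)}` is Lebesgue integrable on `ℝ`, with the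
quantitative bound `∫_ℝ e^{−2t Re Ψ(ξ)} dξ ≤ 2π (β + 1/(e t)) Υ(β)`. -/
theorem exp_re_psi_integrable (Ψ : ℝ → ℂ) (hΨ : Measurable Ψ)
    (hre : ∀ ξ : ℝ, 0 ≤ (Ψ ξ).re)
    (β : ℝ) (hβ : 0 < β) (hfin : Upsilon Ψ β < ⊤)
    (t : ℝ) (ht : 0 < t) :
    Integrable (fun ξ : ℝ => exp (-2 * t * (Ψ ξ).re)) ∧
    ∫⁻ ξ : ℝ, ENNReal.ofReal (exp (-2 * t * (Ψ ξ).re)) ≤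
      ENNReal.ofReal (2 * π * (β + 1 / (exp 1 * t))) * Upsilon Ψ β := by
  have hbound : ∫⁻ ξ : ℝ, ENNReal.ofReal (exp (-2 * t * (Ψ ξ).re)) ≤
      ENNReal.ofReal (2 * π * (β + 1 / (exp 1 * t))) * Upsilon Ψ β := by
    have h := lintegral_ofReal_exp_neg_mul_le volume (fun ξ ↦ by linarith [hre ξ] :
      ∀ ξ, 0 ≤ 2 * (Ψ ξ).re) hβ ht
    rw [ENNReal.ofReal_mul two_pi_pos.le, mul_comm (ENNReal.ofReal (2 * π)), mul_assoc,
      ofReal_two_pi_mul_Upsilon]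
    simpa only [show ∀ r : ℝ, -2 * t * r = -t * (2 * r) by intro r; ring] using h
  have hmeas : Measurable fun ξ : ℝ => exp (-2 * t * (Ψ ξ).re) := by fun_prop
  refine ⟨(lintegral_ofReal_ne_top_iff_integrable hmeas.aestronglyMeasurable
    (Filter.Eventually.of_forall fun ξ ↦ (exp_pos _).le)).mp ?_, hbound⟩
  exact (hbound.trans_lt (ENNReal.mul_lt_top ENNReal.ofReal_lt_top hfin)).ne
end
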